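/- For m ≥ 0 and n ≥ 1, define C_m(n,n) = ∑_{a=0}^{m} (-1)^{m-a} H_a(n) H_{m-a}(n), where H_0(n)=1 and H_r(n) = ∑_{0<m₁<⋯<m_r<n} 1/(m₁⋯m_r). Then C_m(n,n) = (-1)^{m/2} · H^{(2)}_{m/2}(n) if m is even, and C_m(n,n) = 0 if m is odd, where H^{(2)}_r(n) = ∑_{0<m₁<⋯<m_r<n} 1/(m₁²⋯m_r²). -/

import Mathlib

/-- `H_r(n) = ∑_{0<m₁<⋯<m_r<n} 1/(m₁⋯m_r)`, with `H_0(n) = 1`. -/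
noncomputable def Hh (r n : ℕ) : ℚ :=
  ∑ s ∈ Finset.powersetCard r (Finset.Icc 1 (n - 1)), ∏ m ∈ s, 1 / (m : ℚ)

/-- `H^{(2)}_r(n) = ∑_{0<m₁<⋯<m_r<n} 1/(m₁²⋯m_r²)`. -/
noncomputable def H2 (r n : ℕ) : ℚ :=
  ∑ s ∈ Finset.powersetCard r (Finset.Icc 1 (n - 1)), ∏ m ∈ s, 1 / (m : ℚ) ^ 2


/-!
With `E(X) = ∏_{r ∈ s} (1 + rX)`, the alternating sum is the coefficient of `X^m` in
`E(X) E(-X) = ∏_{r ∈ s} (1 - r²X²)`, a polynomial in `X²` whose coefficient of `X^{2k}` is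
`(-1)^k e_k(r²)`. For `H_r(n)` the multiset is `{1/i : 0 < i < n}`.
-/

open Polynomial Finset

namespace Multiset

variable {R : Type*}

section CommSemiring

variable [CommSemiring R]

theorem esymm_zero_right (s : Multiset R) : s.esymm 0 = 1 := by
  simp [esymm, powersetCard_zero_left]

theorem esymm_cons_succ (a : R) (s : Multiset R) (k : ℕ) :
    (a ::ₘ s).esymm (k + 1) = s.esymm (k + 1) + a * s.esymm k := by
  simp [esymm, powersetCard_cons, map_map, sum_map_mul_left]

theorem coeff_prod_map_one_add_C_mul_X (s : Multiset R) (k : ℕ) :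
    (s.map fun r => 1 + C r * X).prod.coeff k = s.esymm k := by
  induction s using Multiset.induction generalizing k with
  | empty => cases k <;> simp [coeff_one, esymm, powersetCard_zero_left, powersetCard_zero_right]
  | cons a s ih =>
    rw [map_cons, prod_cons, add_mul, one_mul, mul_assoc, coeff_add, coeff_C_mul]
    cases k with
    | zero => simp [ih, esymm_zero_right]
    | succ k => rw [coeff_X_mul, ih, ih, esymm_cons_succ]

end CommSemiring

variable [CommRing R]

theorem prod_map_one_add_C_mul_X_mul_prod_map_neg (s : Multiset R) :
    (s.map fun r => 1 + C r * X).prod * ((s.map Neg.neg).map fun r => 1 + C r * X).prod =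
      expand R 2 (((s.map (· ^ 2)).map Neg.neg).map fun r => 1 + C r * X).prod := by
  simp only [map_map, Function.comp_def, ← prod_map_mul, map_multiset_prod]
  congr 1
  refine map_congr rfl fun r _ => ?_
  rw [_root_.map_add, map_one, _root_.map_mul, expand_C, expand_X, C_neg, C_neg, C_pow]
  ring

theorem sum_range_neg_one_pow_mul_esymm_mul_esymm (s : Multiset R) (m : ℕ) :
    ∑ a ∈ Finset.range (m + 1), (-1 : R) ^ (m - a) * s.esymm a * s.esymm (m - a) =
      if Even m then (-1 : R) ^ (m / 2) * (s.map (· ^ 2)).esymm (m / 2) else 0 := by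
  have h := congrArg (coeff · m) (prod_map_one_add_C_mul_X_mul_prod_map_neg s)
  simp only [coeff_mul, coeff_expand two_pos, coeff_prod_map_one_add_C_mul_X, esymm_neg,
    Nat.sum_antidiagonal_eq_sum_range_succ_mk, even_iff_two_dvd] at h ⊢
  rw [← h]
  exact sum_congr rfl fun a _ => by ring

end Multiset

theorem C_diag_eq_general (m n : ℕ) :
    (∑ a ∈ Finset.range (m + 1), (-1 : ℚ) ^ (m - a) * Hh a n * Hh (m - a) n) =
      if Even m then (-1 : ℚ) ^ (m / 2) * H2 (m / 2) n else 0 := by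
  set s := (Icc 1 (n - 1)).val.map fun i : ℕ => 1 / (i : ℚ)
  have hHh (r : ℕ) : Hh r n = s.esymm r := (esymm_map_val _ _ r).symm
  have hH2 (r : ℕ) : H2 r n = (s.map (· ^ 2)).esymm r := by
    simp only [s, Multiset.map_map, Function.comp_def, one_div_pow]
    exact (esymm_map_val _ _ r).symm
  simp only [hHh, hH2]
  exact s.sum_range_neg_one_pow_mul_esymm_mul_esymm m

theorem C_diag_eq (m n : ℕ) (hn : 1 ≤ n) :
    (∑ a ∈ Finset.range (m + 1), (-1 : ℚ) ^ (m - a) * Hh a n * Hh (m - a) n) =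
      if Even m then (-1 : ℚ) ^ (m / 2) * H2 (m / 2) n else 0 :=
  C_diag_eq_general m n
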